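/- arXiv:1212.1725 — 3 statements merged into one kernel-verified Lean document; each statement's English description precedes it below -/
import Mathlib

section
/- (Ermakov system.) Let ω > 0 and let W : ℝ³ ∖ {0} → ℝ be differentiable and positively homogeneous of degree −2, i.e. W(s·y) = s⁻²·W(y) for all s > 0 and all y ≠ 0. Set V(y) = −(ω²/8)·|y|² + W(y). If x : ℝ → ℝ³ ∖ {0} is twice differentiable and satisfies ẍ(t) = −∇V(x(t)) = (ω²/4)·x(t) − ∇W(x(t)) for all t, then the function t ↦ e^{ωt}·( (2/ω)·E(t) − ⟨x(t), ẋ(t)⟩ + (ω/2)·|x(t)|² ) is constant on ℝ, where E(t) = ½|ẋ(t)|² + V(x(t)). -/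
/-!
Energy is conserved along the solution, and Euler's relation `⟪∇W y, y⟫ = -2 W y` turns the
virial identity `d/dt ⟪x, ẋ⟫ = ‖ẋ‖² + ⟪x, ẍ⟫` into `d/dt ⟪x, ẋ⟫ = 2E + (ω²/2)‖x‖²`. With
`d/dt ‖x‖² = 2⟪x, ẋ⟫` this gives `F' = -ω F` for `F = (2/ω)E - ⟪x, ẋ⟫ + (ω/2)‖x‖²`, so
`e^{ωt} F` has zero derivative.
-/

open scoped RealInnerProductSpace

section Euler

variable {E F : Type*} [NormedAddCommGroup E] [NormedSpace ℝ E]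
  [NormedAddCommGroup F] [NormedSpace ℝ F]

theorem HasFDerivAt.apply_self_eq_smul_of_homogeneous {f : E → F} {f' : E →L[ℝ] F} {y : E}
    {k : ℝ} (hf : HasFDerivAt f f' y) (hhom : ∀ s : ℝ, 0 < s → f (s • y) = s ^ k • f y) :
    f' y = k • f y := by
  have hray : HasDerivAt (fun s : ℝ => s • y) y 1 := by
    simpa using (hasDerivAt_id (1 : ℝ)).smul_const y
  have hleft : HasDerivAt (fun s : ℝ => f (s • y)) (f' y) 1 :=
    (one_smul ℝ y ▸ hf).comp_hasDerivAt 1 hray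
  have hright : HasDerivAt (fun s : ℝ => s ^ k • f y) (k • f y) 1 := by
    simpa using (Real.hasDerivAt_rpow_const (p := k) (Or.inl one_ne_zero)).smul_const (f y)
  refine hleft.unique (hright.congr_of_eventuallyEq ?_)
  filter_upwards [lt_mem_nhds one_pos] with s hs using hhom s hs

end Euler

section Gradient

variable {E : Type*} [NormedAddCommGroup E] [InnerProductSpace ℝ E] [CompleteSpace E]

theorem HasGradientAt.inner_self_eq_mul_of_homogeneous {f : E → ℝ} {g y : E} {k : ℝ}
    (hf : HasGradientAt f g y) (hhom : ∀ s : ℝ, 0 < s → f (s • y) = s ^ k * f y) :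
    ⟪g, y⟫ = k * f y :=
  hf.hasFDerivAt.apply_self_eq_smul_of_homogeneous hhom

theorem HasGradientAt.const_mul_norm_sq_add {W : E → ℝ} {g y : E} (c : ℝ)
    (hW : HasGradientAt W g y) :
    HasGradientAt (fun y => c * ‖y‖ ^ 2 + W y) ((2 * c) • y + g) y := by
  rw [hasGradientAt_iff_hasFDerivAt]
  refine (((hasStrictFDerivAt_norm_sq y).hasFDerivAt.const_mul c).add
    hW.hasFDerivAt).congr_fderiv ?_
  ext v
  simp
  ring

theorem hasDerivAt_energy {V : E → ℝ} {x x' : ℝ → E} {a : E} {t : ℝ}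
    (hx : HasDerivAt x (x' t) t) (hx' : HasDerivAt x' a t) (hV : HasGradientAt V (-a) (x t)) :
    HasDerivAt (fun t => 1 / 2 * ‖x' t‖ ^ 2 + V (x t)) 0 t := by
  refine ((hx'.norm_sq.const_mul (1 / 2)).add (hV.hasFDerivAt.comp_hasDerivAt t hx)).congr_deriv ?_
  simp [real_inner_comm]

end Gradient

theorem exp_mul_eq_exp_mul_of_hasDerivAt_neg_mul {f : ℝ → ℝ} {c : ℝ}
    (hf : ∀ t, HasDerivAt f (-c * f t) t) (s t : ℝ) :
    Real.exp (c * s) * f s = Real.exp (c * t) * f t := by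
  have hd : ∀ t, HasDerivAt (fun t => Real.exp (c * t) * f t) 0 t := fun t => by
    refine ((((hasDerivAt_id t).const_mul c).exp).mul (hf t)).congr_deriv ?_
    ring
  exact is_const_of_deriv_eq_zero (fun t => (hd t).differentiableAt) (fun t => (hd t).deriv) s t

/-- Ermakov system: let `ω > 0` and `W : ℝ³∖{0} → ℝ` be differentiable and
positively homogeneous of degree −2, and set `V(y) = −(ω²/8)|y|² + W(y)`. Along any
solution `x` (with `x(t) ≠ 0`) of `ẍ = −∇V(x) = (ω²/4)x − ∇W(x)`, the quantity
`e^{ωt}·((2/ω)E − ⟨x, ẋ⟩ + (ω/2)|x|²)` is constant, where `E = ½|ẋ|² + V(x)`. -/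
theorem ermakov_noether_integral
    (ω : ℝ) (hω : 0 < ω)
    (W : EuclideanSpace ℝ (Fin 3) → ℝ)
    (hW : ∀ y : EuclideanSpace ℝ (Fin 3), y ≠ 0 → DifferentiableAt ℝ W y)
    (hWhom : ∀ s : ℝ, 0 < s → ∀ y : EuclideanSpace ℝ (Fin 3), y ≠ 0 →
      W (s • y) = s⁻¹ ^ 2 * W y)
    (V : EuclideanSpace ℝ (Fin 3) → ℝ)
    (hV : ∀ y : EuclideanSpace ℝ (Fin 3), V y = -(ω ^ 2 / 8) * ‖y‖ ^ 2 + W y)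
    (x x' x'' : ℝ → EuclideanSpace ℝ (Fin 3))
    (hxne : ∀ t : ℝ, x t ≠ 0)
    (hx : ∀ t : ℝ, HasDerivAt x (x' t) t)
    (hx' : ∀ t : ℝ, HasDerivAt x' (x'' t) t)
    (heq : ∀ t : ℝ, x'' t = (ω ^ 2 / 4) • x t - gradient W (x t))
    (E : ℝ → ℝ)
    (hE : ∀ t : ℝ, E t = (1 / 2) * ‖x' t‖ ^ 2 + V (x t)) :
    ∀ s t : ℝ,
      Real.exp (ω * s) *
          ((2 / ω) * E s - (inner ℝ (x s) (x' s) : ℝ) + (ω / 2) * ‖x s‖ ^ 2) =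
      Real.exp (ω * t) *
          ((2 / ω) * E t - (inner ℝ (x t) (x' t) : ℝ) + (ω / 2) * ‖x t‖ ^ 2) := by
  have hgradW : ∀ t, HasGradientAt W (gradient W (x t)) (x t) := fun t =>
    (hW _ (hxne t)).hasGradientAt
  have hgradV : ∀ t, HasGradientAt V (-x'' t) (x t) := fun t => by
    rw [show V = fun y => -(ω ^ 2 / 8) * ‖y‖ ^ 2 + W y from funext hV, heq t]
    convert (hgradW t).const_mul_norm_sq_add (-(ω ^ 2 / 8)) using 1
    module
  have hvirial : ∀ t, ⟪x t, x'' t⟫ = ω ^ 2 / 4 * ‖x t‖ ^ 2 + 2 * W (x t) := fun t => by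
    have heuler := (hgradW t).inner_self_eq_mul_of_homogeneous (k := -2) fun s hs => by
      rw [hWhom s hs _ (hxne t), Real.rpow_neg hs.le, Real.rpow_two, inv_pow]
    rw [real_inner_comm] at heuler
    rw [heq t, inner_sub_right, real_inner_smul_right, heuler,
      real_inner_self_eq_norm_sq]
    ring
  have hE' : ∀ t, HasDerivAt E 0 t := fun t => by
    simpa only [← funext hE] using hasDerivAt_energy (hx t) (hx' t) (hgradV t)
  refine exp_mul_eq_exp_mul_of_hasDerivAt_neg_mul fun t => ?_
  refine ((((hE' t).const_mul (2 / ω)).sub ((hx t).inner ℝ (hx' t))).add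
    ((hx t).norm_sq.const_mul (ω / 2))).congr_deriv ?_
  rw [hvirial, hE, hV, real_inner_self_eq_norm_sq]
  field_simp
  ring
end

section
/- Let a, c ∈ ℝ and suppose the potential of motion on the 2-sphere has the form V(θ, φ) = F(a·cos θ·sin φ − c·cos φ) for some differentiable function F : ℝ → ℝ. Then along any solution (φ(t), θ(t)) of the equations of motion on an interval where sin φ(t) ≠ 0, the quantity a·I¹(t) + c·I³(t) is constant, where I¹ = φ̇ sin θ + θ̇ cos θ sin φ cos φ and I³ = θ̇ sin²φ. (This is the row a I_{CK¹} + b I_{CK³} of Table 7.) -/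
open Real

/-!
In the embedding `(sin φ cos θ, sin φ sin θ, cos φ)` of the sphere, `a I¹ + c I³` is the Noether
integral `⟨X, q̇⟩` of the rotation field `X = (a cos θ cot φ + c) ∂_θ + a sin θ ∂_φ` about the
axis `(a, 0, -c)`. Along a solution `d/dt (a I¹ + c I³) = -X V`, and `X` annihilates the
coordinate `a cos θ sin φ - c cos φ` along its axis, hence every function of it.
-/

noncomputable def noetherI1 (θ φ θ' φ' : ℝ) : ℝ := φ' * sin θ + θ' * cos θ * sin φ * cos φ

noncomputable def noetherI3 (φ θ' : ℝ) : ℝ := θ' * sin φ ^ 2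

section EquationsOfMotion

variable {φ θ φ' θ' φ'' θ'' : ℝ → ℝ} {t Vθ Vφ : ℝ}

lemma hasDerivAt_noetherI1 (hφ : HasDerivAt φ (φ' t) t) (hφ' : HasDerivAt φ' (φ'' t) t)
    (hθ : HasDerivAt θ (θ' t) t) (hθ' : HasDerivAt θ' (θ'' t) t) (hsin : sin (φ t) ≠ 0)
    (eomφ : φ'' t - sin (φ t) * cos (φ t) * θ' t ^ 2 + Vφ = 0)
    (eomθ : θ'' t + 2 * (cos (φ t) / sin (φ t)) * θ' t * φ' t
      + (1 / sin (φ t) ^ 2) * Vθ = 0) :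
    HasDerivAt (fun s => noetherI1 (θ s) (φ s) (θ' s) (φ' s))
      (-(cos (θ t) * cos (φ t) / sin (φ t) * Vθ + sin (θ t) * Vφ)) t := by
  have h := (hφ'.mul hθ.sin).add (((hθ'.mul hθ.cos).mul hφ.sin).mul hφ.cos)
  refine h.congr_deriv ?_
  simp only [Pi.mul_apply]
  field_simp at eomθ ⊢
  linear_combination (sin (θ t) * sin (φ t)) * eomφ
    + (cos (θ t) * cos (φ t)) * eomθ
    - (cos (θ t) * θ' t * φ' t * sin (φ t)) * sin_sq_add_cos_sq (φ t)

lemma hasDerivAt_noetherI3 (hφ : HasDerivAt φ (φ' t) t) (hθ' : HasDerivAt θ' (θ'' t) t)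
    (hsin : sin (φ t) ≠ 0)
    (eomθ : θ'' t + 2 * (cos (φ t) / sin (φ t)) * θ' t * φ' t
      + (1 / sin (φ t) ^ 2) * Vθ = 0) :
    HasDerivAt (fun s => noetherI3 (φ s) (θ' s)) (-Vθ) t := by
  have h := hθ'.mul (hφ.sin.pow 2)
  refine h.congr_deriv ?_
  simp only [Pi.pow_apply]
  field_simp at eomθ ⊢
  linear_combination eomθ

end EquationsOfMotion

lemma fderiv_comp_height_apply (a c : ℝ) {F : ℝ → ℝ} (x y v w : ℝ)
    (hF : DifferentiableAt ℝ F (a * cos x * sin y - c * cos y)) :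
    fderiv ℝ (fun p : ℝ × ℝ => F (a * cos p.1 * sin p.2 - c * cos p.2)) (x, y) (v, w) =
      deriv F (a * cos x * sin y - c * cos y) *
        (-(a * sin x * sin y) * v + (a * cos x * cos y + c * sin y) * w) := by
  have hu : HasFDerivAt (fun p : ℝ × ℝ => a * cos p.1 * sin p.2 - c * cos p.2) _ (x, y) :=
    ((hasFDerivAt_fst.cos.const_mul a).mul hasFDerivAt_snd.sin).sub
      (hasFDerivAt_snd.cos.const_mul c)
  rw [show (fun p : ℝ × ℝ => F (a * cos p.1 * sin p.2 - c * cos p.2)) = F ∘ _ from rfl,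
    (hF.hasDerivAt.comp_hasFDerivAt (x, y) hu).fderiv]
  simp only [smul_apply, sub_apply, add_apply, ContinuousLinearMap.coe_snd', smul_eq_mul,
    ContinuousLinearMap.coe_fst']
  ring

lemma rotation_field_annihilates_height (a c x y : ℝ) (hy : sin y ≠ 0) :
    (a * cos x * cos y / sin y + c) * -(a * sin x * sin y)
      + a * sin x * (a * cos x * cos y + c * sin y) = 0 := by
  field_simp
  ring

theorem sphere_noether_aI1_cI3_general
    (a c : ℝ)
    (V : ℝ × ℝ → ℝ)
    (F : ℝ → ℝ) (hF : Differentiable ℝ F)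
    (hform : ∀ p : ℝ × ℝ, V p = F (a * cos p.1 * sin p.2 - c * cos p.2))
    (t₀ t₁ : ℝ) (φ θ φ' θ' φ'' θ'' : ℝ → ℝ)
    (hφ : ∀ t ∈ Set.Ioo t₀ t₁, HasDerivAt φ (φ' t) t)
    (hφ' : ∀ t ∈ Set.Ioo t₀ t₁, HasDerivAt φ' (φ'' t) t)
    (hθ : ∀ t ∈ Set.Ioo t₀ t₁, HasDerivAt θ (θ' t) t)
    (hθ' : ∀ t ∈ Set.Ioo t₀ t₁, HasDerivAt θ' (θ'' t) t)
    (hsin : ∀ t ∈ Set.Ioo t₀ t₁, sin (φ t) ≠ 0)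
    (eomφ : ∀ t ∈ Set.Ioo t₀ t₁,
      φ'' t - sin (φ t) * cos (φ t) * (θ' t) ^ 2
        + fderiv ℝ V (θ t, φ t) (0, 1) = 0)
    (eomθ : ∀ t ∈ Set.Ioo t₀ t₁,
      θ'' t + 2 * (cos (φ t) / sin (φ t)) * θ' t * φ' t
        + (1 / sin (φ t) ^ 2) * fderiv ℝ V (θ t, φ t) (1, 0) = 0) :
    ∀ s ∈ Set.Ioo t₀ t₁, ∀ t ∈ Set.Ioo t₀ t₁,
      a * (φ' s * sin (θ s) + θ' s * cos (θ s) * sin (φ s) * cos (φ s))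
          + c * (θ' s * sin (φ s) ^ 2) =
      a * (φ' t * sin (θ t) + θ' t * cos (θ t) * sin (φ t) * cos (φ t))
          + c * (θ' t * sin (φ t) ^ 2) := by
  obtain rfl : V = fun p => F (a * cos p.1 * sin p.2 - c * cos p.2) := funext hform
  have hconserved : ∀ t ∈ Set.Ioo t₀ t₁, HasDerivAt
      (fun u => a * noetherI1 (θ u) (φ u) (θ' u) (φ' u) + c * noetherI3 (φ u) (θ' u)) 0 t := by
    intro t ht
    have hI := ((hasDerivAt_noetherI1 (hφ t ht) (hφ' t ht) (hθ t ht) (hθ' t ht) (hsin t ht)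
      (eomφ t ht) (eomθ t ht)).const_mul a).add
      ((hasDerivAt_noetherI3 (hφ t ht) (hθ' t ht) (hsin t ht) (eomθ t ht)).const_mul c)
    refine hI.congr_deriv ?_
    rw [fderiv_comp_height_apply a c _ _ _ _ (hF _), fderiv_comp_height_apply a c _ _ _ _ (hF _)]
    linear_combination (-deriv F (a * cos (θ t) * sin (φ t) - c * cos (φ t)))
      * rotation_field_annihilates_height a c (θ t) (φ t) (hsin t ht)
  intro s hs t ht
  exact isOpen_Ioo.is_const_of_deriv_eq_zero isPreconnected_Ioo
    (fun u hu => (hconserved u hu).differentiableAt.differentiableWithinAt)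
    (fun u hu => (hconserved u hu).deriv) hs ht

/-- motion on the 2-sphere with potential of the form
`V(θ, φ) = F(a·cos θ·sin φ − c·cos φ)`. Along any solution on an interval where
`sin φ ≠ 0`, the combination `a·I¹ + c·I³` of the Noether integrals
`I¹ = φ̇·sin θ + θ̇·cos θ·sin φ·cos φ` and `I³ = θ̇·sin²φ` is constant. -/
theorem sphere_noether_aI1_cI3
    (a c : ℝ)
    (V : ℝ × ℝ → ℝ) (hV : Differentiable ℝ V)
    (F : ℝ → ℝ) (hF : Differentiable ℝ F)
    (hform : ∀ p : ℝ × ℝ, V p = F (a * cos p.1 * sin p.2 - c * cos p.2))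
    (t₀ t₁ : ℝ) (φ θ φ' θ' φ'' θ'' : ℝ → ℝ)
    (hφ : ∀ t ∈ Set.Ioo t₀ t₁, HasDerivAt φ (φ' t) t)
    (hφ' : ∀ t ∈ Set.Ioo t₀ t₁, HasDerivAt φ' (φ'' t) t)
    (hθ : ∀ t ∈ Set.Ioo t₀ t₁, HasDerivAt θ (θ' t) t)
    (hθ' : ∀ t ∈ Set.Ioo t₀ t₁, HasDerivAt θ' (θ'' t) t)
    (hsin : ∀ t ∈ Set.Ioo t₀ t₁, sin (φ t) ≠ 0)
    (eomφ : ∀ t ∈ Set.Ioo t₀ t₁,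
      φ'' t - sin (φ t) * cos (φ t) * (θ' t) ^ 2
        + fderiv ℝ V (θ t, φ t) (0, 1) = 0)
    (eomθ : ∀ t ∈ Set.Ioo t₀ t₁,
      θ'' t + 2 * (cos (φ t) / sin (φ t)) * θ' t * φ' t
        + (1 / sin (φ t) ^ 2) * fderiv ℝ V (θ t, φ t) (1, 0) = 0) :
    ∀ s ∈ Set.Ioo t₀ t₁, ∀ t ∈ Set.Ioo t₀ t₁,
      a * (φ' s * sin (θ s) + θ' s * cos (θ s) * sin (φ s) * cos (φ s))
          + c * (θ' s * sin (φ s) ^ 2) =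
      a * (φ' t * sin (θ t) + θ' t * cos (θ t) * sin (φ t) * cos (φ t))
          + c * (θ' t * sin (φ t) ^ 2) :=
  sphere_noether_aI1_cI3_general a c V F hF hform t₀ t₁ φ θ φ' θ' φ'' θ'' hφ hφ' hθ hθ' hsin eomφ
    eomθ
end

section
/- For the Bianchi I model with massless scalar field (zero potential), the Noether integral of the point symmetry t²∂_t + tH^i (where H^i = (2/3)∂_λ is the gradient homothetic vector of the minisuperspace metric, with gradient function H = (8/3)e^{3λ}) is conserved: if λ, β₁, β₂, φ : ℝ → ℝ are twice differentiable and satisfy λ̈ + (3/2)λ̇² + (3/8)(β̇₁² + β̇₂²) + (1/4)φ̇² = 0, β̈₁ + 3λ̇β̇₁ = 0, β̈₂ + 3λ̇β̇₂ = 0 and φ̈ + 3λ̇φ̇ = 0, then the function t ↦ t²·E(t) − 8t·e^{3λ(t)}·λ̇(t) + (8/3)·e^{3λ(t)} is constant on ℝ, where E(t) = e^{3λ(t)}( 6λ̇(t)² − (3/2)(β̇₁(t)² + β̇₂(t)²) − φ̇(t)² ) is the Hamiltonian. -/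
open Real

/-!
Along solutions the Hamiltonian `E` is conserved, and the gradient function `H = (8/3) e^{3λ}`
of the homothety satisfies `Ḣ = 8 e^{3λ} λ̇` and `Ḧ = 2E`. The Noether integral is
`t² E - t Ḣ + H`, whose derivative is `2tE - Ḣ - tḦ + Ḣ = 0`.
-/

noncomputable section

namespace BianchiI

variable (lam lam' β₁' β₂' φ' : ℝ → ℝ)

def hamiltonian (t : ℝ) : ℝ :=
  exp (3 * lam t) * (6 * lam' t ^ 2 - (3 / 2) * (β₁' t ^ 2 + β₂' t ^ 2) - φ' t ^ 2)

def noetherIntegral (t : ℝ) : ℝ :=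
  t ^ 2 * hamiltonian lam lam' β₁' β₂' φ' t - 8 * t * (exp (3 * lam t) * lam' t)
    + (8 / 3) * exp (3 * lam t)

variable {lam lam' β₁' β₂' φ'} {lam'' β₁'' β₂'' φ'' : ℝ → ℝ} {t : ℝ}

theorem hasDerivAt_hamiltonian
    (hlam : HasDerivAt lam (lam' t) t) (hlam' : HasDerivAt lam' (lam'' t) t)
    (hβ₁' : HasDerivAt β₁' (β₁'' t) t) (hβ₂' : HasDerivAt β₂' (β₂'' t) t)
    (hφ' : HasDerivAt φ' (φ'' t) t)
    (eomlam : lam'' t + (3 / 2) * lam' t ^ 2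
      + (3 / 8) * (β₁' t ^ 2 + β₂' t ^ 2) + (1 / 4) * φ' t ^ 2 = 0)
    (eomβ₁ : β₁'' t + 3 * lam' t * β₁' t = 0)
    (eomβ₂ : β₂'' t + 3 * lam' t * β₂' t = 0)
    (eomφ : φ'' t + 3 * lam' t * φ' t = 0) :
    HasDerivAt (hamiltonian lam lam' β₁' β₂' φ') 0 t := by
  have hkin := (((hlam'.fun_pow 2).const_mul 6).fun_sub
    (((hβ₁'.fun_pow 2).fun_add (hβ₂'.fun_pow 2)).const_mul (3 / 2 : ℝ))).fun_sub (hφ'.fun_pow 2)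
  refine ((hlam.const_mul 3).exp.fun_mul hkin).congr_deriv ?_
  linear_combination exp (3 * lam t) * (12 * lam' t * eomlam - 3 * β₁' t * eomβ₁
    - 3 * β₂' t * eomβ₂ - 2 * φ' t * eomφ)

theorem hasDerivAt_exp_mul_lam'
    (hlam : HasDerivAt lam (lam' t) t) (hlam' : HasDerivAt lam' (lam'' t) t)
    (eomlam : lam'' t + (3 / 2) * lam' t ^ 2
      + (3 / 8) * (β₁' t ^ 2 + β₂' t ^ 2) + (1 / 4) * φ' t ^ 2 = 0) :
    HasDerivAt (fun t => exp (3 * lam t) * lam' t)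
      (hamiltonian lam lam' β₁' β₂' φ' t / 4) t := by
  refine ((hlam.const_mul 3).exp.fun_mul hlam').congr_deriv ?_
  rw [hamiltonian]
  linear_combination exp (3 * lam t) * eomlam

theorem hasDerivAt_noetherIntegral
    (hlam : HasDerivAt lam (lam' t) t) (hlam' : HasDerivAt lam' (lam'' t) t)
    (hβ₁' : HasDerivAt β₁' (β₁'' t) t) (hβ₂' : HasDerivAt β₂' (β₂'' t) t)
    (hφ' : HasDerivAt φ' (φ'' t) t)
    (eomlam : lam'' t + (3 / 2) * lam' t ^ 2
      + (3 / 8) * (β₁' t ^ 2 + β₂' t ^ 2) + (1 / 4) * φ' t ^ 2 = 0)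
    (eomβ₁ : β₁'' t + 3 * lam' t * β₁' t = 0)
    (eomβ₂ : β₂'' t + 3 * lam' t * β₂' t = 0)
    (eomφ : φ'' t + 3 * lam' t * φ' t = 0) :
    HasDerivAt (noetherIntegral lam lam' β₁' β₂' φ') 0 t := by
  have hE := hasDerivAt_hamiltonian hlam hlam' hβ₁' hβ₂' hφ' eomlam eomβ₁ eomβ₂ eomφ
  have hH' := hasDerivAt_exp_mul_lam' (β₁' := β₁') (β₂' := β₂') (φ' := φ') hlam hlam' eomlam
  have hH := (hlam.const_mul 3).exp
  refine ((((hasDerivAt_pow 2 t).fun_mul hE).fun_sub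
    (((hasDerivAt_id t).const_mul 8).fun_mul hH')).fun_add (hH.const_mul (8 / 3))).congr_deriv ?_
  simp only [id]
  ring

end BianchiI

end

theorem bianchiI_noether_t2dt_tH_general
    (lam lam' β₁' β₂' φ' lam'' β₁'' β₂'' φ'' : ℝ → ℝ)
    (hlam : ∀ t : ℝ, HasDerivAt lam (lam' t) t)
    (hlam' : ∀ t : ℝ, HasDerivAt lam' (lam'' t) t)
    (hβ₁' : ∀ t : ℝ, HasDerivAt β₁' (β₁'' t) t)
    (hβ₂' : ∀ t : ℝ, HasDerivAt β₂' (β₂'' t) t)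
    (hφ' : ∀ t : ℝ, HasDerivAt φ' (φ'' t) t)
    (eomlam : ∀ t : ℝ, lam'' t + (3 / 2) * lam' t ^ 2
      + (3 / 8) * (β₁' t ^ 2 + β₂' t ^ 2) + (1 / 4) * φ' t ^ 2 = 0)
    (eomβ₁ : ∀ t : ℝ, β₁'' t + 3 * lam' t * β₁' t = 0)
    (eomβ₂ : ∀ t : ℝ, β₂'' t + 3 * lam' t * β₂' t = 0)
    (eomφ : ∀ t : ℝ, φ'' t + 3 * lam' t * φ' t = 0)
    (E : ℝ → ℝ)
    (hE : ∀ t : ℝ, E t = exp (3 * lam t) *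
      (6 * lam' t ^ 2 - (3 / 2) * (β₁' t ^ 2 + β₂' t ^ 2) - φ' t ^ 2)) :
    ∀ s t : ℝ,
      s ^ 2 * E s - 8 * s * exp (3 * lam s) * lam' s + (8 / 3) * exp (3 * lam s) =
      t ^ 2 * E t - 8 * t * exp (3 * lam t) * lam' t + (8 / 3) * exp (3 * lam t) := by
  intro s t
  obtain rfl : E = BianchiI.hamiltonian lam lam' β₁' β₂' φ' := funext hE
  have hI (t : ℝ) := BianchiI.hasDerivAt_noetherIntegral (hlam t) (hlam' t) (hβ₁' t) (hβ₂' t)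
    (hφ' t) (eomlam t) (eomβ₁ t) (eomβ₂ t) (eomφ t)
  have := is_const_of_deriv_eq_zero (fun t => (hI t).differentiableAt) (fun t => (hI t).deriv) s t
  unfold BianchiI.noetherIntegral at this
  linarith

/-- for the Bianchi I model with massless scalar field, the Noether
integral of the point symmetry `t²∂_t + tHⁱ` (with `Hⁱ = (2/3)∂_λ` the gradient
homothetic vector of the minisuperspace metric, with gradient function
`H = (8/3)e^{3λ}`) is conserved: along solutions of the full Euler–Lagrange equations
the quantity `t²·E − 8t·e^{3λ}·λ̇ + (8/3)·e^{3λ}` is constant, where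
`E = e^{3λ}(6λ̇² − (3/2)(β̇₁² + β̇₂²) − φ̇²)` is the Hamiltonian. -/
theorem bianchiI_noether_t2dt_tH
    (lam β₁ β₂ φ lam' β₁' β₂' φ' lam'' β₁'' β₂'' φ'' : ℝ → ℝ)
    (hlam : ∀ t : ℝ, HasDerivAt lam (lam' t) t)
    (hlam' : ∀ t : ℝ, HasDerivAt lam' (lam'' t) t)
    (hβ₁ : ∀ t : ℝ, HasDerivAt β₁ (β₁' t) t)
    (hβ₁' : ∀ t : ℝ, HasDerivAt β₁' (β₁'' t) t)
    (hβ₂ : ∀ t : ℝ, HasDerivAt β₂ (β₂' t) t)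
    (hβ₂' : ∀ t : ℝ, HasDerivAt β₂' (β₂'' t) t)
    (hφ : ∀ t : ℝ, HasDerivAt φ (φ' t) t)
    (hφ' : ∀ t : ℝ, HasDerivAt φ' (φ'' t) t)
    (eomlam : ∀ t : ℝ, lam'' t + (3 / 2) * lam' t ^ 2
      + (3 / 8) * (β₁' t ^ 2 + β₂' t ^ 2) + (1 / 4) * φ' t ^ 2 = 0)
    (eomβ₁ : ∀ t : ℝ, β₁'' t + 3 * lam' t * β₁' t = 0)
    (eomβ₂ : ∀ t : ℝ, β₂'' t + 3 * lam' t * β₂' t = 0)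
    (eomφ : ∀ t : ℝ, φ'' t + 3 * lam' t * φ' t = 0)
    (E : ℝ → ℝ)
    (hE : ∀ t : ℝ, E t = exp (3 * lam t) *
      (6 * lam' t ^ 2 - (3 / 2) * (β₁' t ^ 2 + β₂' t ^ 2) - φ' t ^ 2)) :
    ∀ s t : ℝ,
      s ^ 2 * E s - 8 * s * exp (3 * lam s) * lam' s + (8 / 3) * exp (3 * lam s) =
      t ^ 2 * E t - 8 * t * exp (3 * lam t) * lam' t + (8 / 3) * exp (3 * lam t) :=
  bianchiI_noether_t2dt_tH_general lam lam' β₁' β₂' φ' lam'' β₁'' β₂'' φ'' hlam hlam' hβ₁' hβ₂' hφ'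
    eomlam eomβ₁ eomβ₂ eomφ E hE
end
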